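/- arXiv:2004.01140 — 4 statements merged into one kernel-verified Lean document; each statement's English description precedes it below -/
import Mathlib

section
/- Let n = d·m with d, m positive integers, and let χ be any function from the set of integer partitions of n to the complex numbers. In the field of rational functions ℂ(q), set F(q) = (∏_{j=1}^{n} (1 − q^j)) · Σ_{ν ⊢ n} (χ(ν)/z_ν) · ∏_{i=1}^{ℓ(ν)} (1 − q^{ν_i})^{−1}, where for a partition ν, z_ν = ∏_j m_j!·j^{m_j} with m_j the number of parts of ν equal to j, and ℓ(ν) is the number of parts of ν. Suppose F(q) is (equal in ℂ(q) to) a polynomial f(q) with integer coefficients. Then for ξ = exp(2πi/n) a primitive n-th root of unity, f(ξ^d) = χ((m^d)), where (m^d) denotes the partition of n having d parts all equal to m. -/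
/-!
Write `1 - q ^ j = (1 - q ^ m) ^ [m ∣ j] * g_j(q)` with `g_j = cofactorOneSubXPow ℂ m j`, which
does not vanish at the primitive `m`-th root of unity `ζ = ξ ^ d`. The numerator
`∏_{j ≤ n} (1 - q ^ j)` then contains `(1 - q ^ m) ^ d`, while the `ν`-th denominator contains
`(1 - q ^ m) ^ e(ν)`, where `e(ν)` is the number of parts of `ν` divisible by `m`; `e(ν) ≤ d`,
with equality only for `ν = (m^d)`. After clearing the remaining denominators `∏ g_{ν_i}`, which
are nonzero at `ζ`, every term except `ν = (m^d)` vanishes at `ζ`, and that term is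
`χ(m^d) / z_{(m^d)} · ∏_{j ≤ n} g_j(ζ) = χ(m^d)`, because `∏_{j ≤ n} g_j(ζ) = d! m^d = z_{(m^d)}`.
-/

open Finset

/-- The quantity `z_ν = ∏_j m_j! · j^{m_j}`, where `m_j` is the number of parts of `ν`
equal to `j`, as a complex number. -/
noncomputable def zPartition {n : ℕ} (ν : Nat.Partition n) : ℂ :=
  ((∏ j ∈ ν.parts.toFinset,
      (ν.parts.count j).factorial * j ^ ν.parts.count j : ℕ) : ℂ)

open Polynomial
open scoped Nat

namespace Multiset

theorem mul_countP_dvd_le_sum {s : Multiset ℕ} (hs : ∀ x ∈ s, 0 < x) (m : ℕ) :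
    m * s.countP (m ∣ ·) ≤ s.sum := by
  induction s using Multiset.induction with
  | empty => simp
  | cons a s ih =>
    have ha := hs a (mem_cons_self a s)
    have := ih fun x hx => hs x (mem_cons_of_mem hx)
    rw [countP_cons, sum_cons, mul_add]
    split_ifs with h
    · have := Nat.le_of_dvd ha h; omega
    · omega

theorem eq_replicate_of_mul_countP_dvd_eq_sum {s : Multiset ℕ} (hs : ∀ x ∈ s, 0 < x) {m : ℕ}
    (h : m * s.countP (m ∣ ·) = s.sum) : s = replicate (card s) m := by
  refine eq_replicate_card.2 ?_
  induction s using Multiset.induction with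
  | empty => simp
  | cons a s ih =>
    have ha := hs a (mem_cons_self a s)
    have hs' : ∀ x ∈ s, 0 < x := fun x hx => hs x (mem_cons_of_mem hx)
    have hle := mul_countP_dvd_le_sum hs' m
    rw [countP_cons, sum_cons, mul_add] at h
    split_ifs at h with hdvd
    · have := Nat.le_of_dvd ha hdvd
      rintro b hb
      rcases mem_cons.1 hb with rfl | hb
      · omega
      · exact ih hs' (by omega) b hb
    · omega

end Multiset

namespace Nat.Partition

variable {n d m : ℕ}

theorem countP_dvd_le (hm : 0 < m) (hn : n = d * m) (ν : n.Partition) :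
    ν.parts.countP (m ∣ ·) ≤ d := by
  have hle := (ν.parts.mul_countP_dvd_le_sum (fun _ => ν.parts_pos) m).trans_eq
    (ν.parts_sum.trans hn)
  exact Nat.le_of_mul_le_mul_left (by rwa [mul_comm d] at hle) hm

theorem parts_eq_replicate_of_countP_dvd_eq (hn : n = d * m) {ν : n.Partition}
    (h : ν.parts.countP (m ∣ ·) = d) : ν.parts = Multiset.replicate d m := by
  have hrep := Multiset.eq_replicate_of_mul_countP_dvd_eq_sum (fun _ => ν.parts_pos)
    (by rw [h, ν.parts_sum, hn, mul_comm])
  have hdvd : ∀ x ∈ ν.parts, m ∣ x := fun x hx => by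
    rw [hrep] at hx
    rw [Multiset.eq_of_mem_replicate hx]
  rw [hrep, ← Multiset.countP_eq_card.2 hdvd, h]

theorem countP_dvd_lt_of_parts_ne (hm : 0 < m) (hn : n = d * m) {ν : n.Partition}
    (h : ν.parts ≠ Multiset.replicate d m) : ν.parts.countP (m ∣ ·) < d :=
  (countP_dvd_le hm hn ν).lt_of_ne fun he => h (parts_eq_replicate_of_countP_dvd_eq hn he)

end Nat.Partition

theorem Finset.countP_dvd_Icc_one_mul {m : ℕ} (hm : 0 < m) (d : ℕ) :
    (Icc 1 (d * m)).val.countP (m ∣ ·) = d := by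
  rw [Multiset.countP_eq_card_filter, ← Finset.filter_val, ← Finset.card_def]
  show #{x ∈ Ioc 0 (d * m) | m ∣ x} = d
  rw [Nat.Ioc_filter_dvd_card_eq_div, Nat.mul_div_cancel d hm]

namespace Polynomial

noncomputable def cofactorOneSubXPow (R : Type*) [CommRing R] (m j : ℕ) : R[X] :=
  if m ∣ j then ∑ i ∈ range (j / m), X ^ (m * i) else 1 - X ^ j

section CommRing

variable {R : Type*} [CommRing R] {m : ℕ}

theorem one_sub_X_pow_eq_mul_cofactorOneSubXPow (hm : 0 < m) (j : ℕ) :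
    (1 - X ^ j : R[X]) = (1 - X ^ m) ^ (if m ∣ j then 1 else 0) * cofactorOneSubXPow R m j := by
  unfold cofactorOneSubXPow
  split_ifs with h
  · obtain ⟨k, rfl⟩ := h
    simp_rw [Nat.mul_div_cancel_left k hm, pow_mul, pow_one]
    linear_combination mul_geom_sum ((X : R[X]) ^ m) k
  · rw [pow_zero, one_mul]

theorem multiset_prod_one_sub_X_pow (hm : 0 < m) (s : Multiset ℕ) :
    (s.map fun j => (1 - X ^ j : R[X])).prod =
      (1 - X ^ m) ^ s.countP (m ∣ ·) * (s.map (cofactorOneSubXPow R m)).prod := by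
  induction s using Multiset.induction with
  | empty => simp
  | cons a s ih =>
    simp only [Multiset.map_cons, Multiset.prod_cons, Multiset.countP_cons, ih, pow_add,
      one_sub_X_pow_eq_mul_cofactorOneSubXPow hm a]
    ring

theorem cofactorOneSubXPow_self (hm : 0 < m) : cofactorOneSubXPow R m m = 1 := by
  simp [cofactorOneSubXPow, Nat.div_self hm]

theorem eval_cofactorOneSubXPow_of_dvd {ζ : R} (hζ : ζ ^ m = 1) {j : ℕ} (hj : m ∣ j) :
    (cofactorOneSubXPow R m j).eval ζ = (j / m : ℕ) := by
  simp [cofactorOneSubXPow, hj, eval_finsetSum, pow_mul, hζ]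

theorem eval_cofactorOneSubXPow_of_not_dvd (ζ : R) {j : ℕ} (hj : ¬ m ∣ j) :
    (cofactorOneSubXPow R m j).eval ζ = 1 - ζ ^ j := by
  simp [cofactorOneSubXPow, hj]

theorem eval_cofactorOneSubXPow_ne_zero [CharZero R] {ζ : R} (hζ : IsPrimitiveRoot ζ m)
    {j : ℕ} (hj : 0 < j) : (cofactorOneSubXPow R m j).eval ζ ≠ 0 := by
  by_cases h : m ∣ j
  · rw [eval_cofactorOneSubXPow_of_dvd hζ.pow_eq_one h, Nat.cast_ne_zero]
    exact (Nat.div_pos (Nat.le_of_dvd hj h) (Nat.pos_of_dvd_of_pos h hj)).ne'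
  · rw [eval_cofactorOneSubXPow_of_not_dvd ζ h, sub_ne_zero, ne_comm]
    exact mt (hζ.pow_eq_one_iff_dvd j).1 h

end CommRing

section IsDomain

variable {R : Type*} [CommRing R] [IsDomain R] {m : ℕ} {ζ : R}

theorem eval_multiset_prod_cofactorOneSubXPow_ne_zero [CharZero R] (hζ : IsPrimitiveRoot ζ m)
    {s : Multiset ℕ} (hs : ∀ j ∈ s, 0 < j) :
    ((s.map (cofactorOneSubXPow R m)).prod).eval ζ ≠ 0 := by
  rw [eval_multiset_prod, Multiset.map_map]
  refine Multiset.prod_ne_zero fun h0 => ?_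
  obtain ⟨j, hj, hj0⟩ := Multiset.mem_map.1 h0
  exact eval_cofactorOneSubXPow_ne_zero hζ (hs j hj) hj0

theorem prod_range_eval_cofactorOneSubXPow_block (hm : 0 < m) (hζ : IsPrimitiveRoot ζ m)
    (k : ℕ) :
    ∏ i ∈ range m, (cofactorOneSubXPow R m (k * m + i + 1)).eval ζ = (k + 1) * m := by
  obtain ⟨m, rfl⟩ : ∃ m', m = m' + 1 := ⟨m - 1, by omega⟩
  have hlow : ∀ i ∈ range m, (cofactorOneSubXPow R (m + 1) (k * (m + 1) + i + 1)).eval ζ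
      = 1 - ζ ^ (i + 1) := by
    intro i hi
    have hndvd : ¬ m + 1 ∣ k * (m + 1) + i + 1 := by
      rw [add_assoc, Nat.dvd_add_right (dvd_mul_left _ _)]
      exact Nat.not_dvd_of_pos_of_lt i.succ_pos (by simpa using hi)
    rw [eval_cofactorOneSubXPow_of_not_dvd ζ hndvd, add_assoc, pow_add, pow_mul',
      hζ.pow_eq_one, one_pow, one_mul]
  have htop : (cofactorOneSubXPow R (m + 1) (k * (m + 1) + m + 1)).eval ζ = k + 1 := by
    rw [add_assoc, ← add_one_mul k, eval_cofactorOneSubXPow_of_dvd hζ.pow_eq_one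
      (dvd_mul_left _ _), Nat.mul_div_cancel _ m.succ_pos]
    push_cast; ring
  rw [prod_range_succ, prod_congr rfl hlow, hζ.prod_one_sub_pow_eq_order, htop]
  push_cast; ring

theorem prod_Icc_eval_cofactorOneSubXPow (hm : 0 < m) (hζ : IsPrimitiveRoot ζ m) (d : ℕ) :
    ∏ j ∈ Icc 1 (d * m), (cofactorOneSubXPow R m j).eval ζ = d ! * m ^ d := by
  rw [← Finset.Ico_add_one_right_eq_Icc, ← zero_add 1, ← prod_Ico_add', ← range_eq_Ico]
  induction d with
  | zero => simp
  | succ d ih =>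
    rw [add_one_mul, prod_range_add, ih, prod_range_eval_cofactorOneSubXPow_block hm hζ,
      Nat.factorial_succ]
    push_cast; ring

end IsDomain

theorem eval_eq_sum_div_of_algebraMap_eq {K ι : Type*} [Field K] {s : Finset ι}
    {p q : ι → K[X]} {f : K[X]} {z : K} (hq : ∀ i ∈ s, (q i).eval z ≠ 0)
    (h : ∑ i ∈ s, algebraMap K[X] (RatFunc K) (p i) / algebraMap K[X] (RatFunc K) (q i)
      = algebraMap K[X] (RatFunc K) f) :
    f.eval z = ∑ i ∈ s, (p i).eval z / (q i).eval z := by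
  classical
  have hq0 : ∀ i ∈ s, algebraMap K[X] (RatFunc K) (q i) ≠ 0 := fun i hi h0 =>
    hq i hi (by rw [(map_eq_zero_iff _ (RatFunc.algebraMap_injective K)).1 h0, eval_zero])
  have hclear : f * ∏ i ∈ s, q i = ∑ i ∈ s, p i * ∏ j ∈ s.erase i, q j := by
    refine RatFunc.algebraMap_injective K ?_
    rw [map_mul, ← h, sum_mul, map_sum]
    refine sum_congr rfl fun i hi => ?_
    rw [← mul_prod_erase s q hi, map_mul, map_mul]
    field_simp [hq0 i hi]
  have hQ : (∏ i ∈ s, q i).eval z ≠ 0 := by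
    rw [eval_prod]; exact prod_ne_zero_iff.2 hq
  refine mul_right_cancel₀ hQ ?_
  rw [← eval_mul, hclear, eval_finsetSum, sum_mul]
  refine sum_congr rfl fun i hi => ?_
  rw [← mul_prod_erase s q hi, eval_mul, eval_mul]
  field_simp [hq i hi]

end Polynomial

namespace RatFunc

variable {K : Type*} [Field K] {m d : ℕ}

theorem multiset_prod_one_sub_X_pow_eq_algebraMap (s : Multiset ℕ) :
    (s.map fun j => (1 - X ^ j : RatFunc K)).prod =
      algebraMap K[X] (RatFunc K) (s.map fun j => (1 - Polynomial.X ^ j : K[X])).prod := by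
  simp [map_multiset_prod, Multiset.map_map, algebraMap_X]

theorem prod_Icc_one_sub_X_pow_mul_prod_inv (hm : 0 < m) {s : Multiset ℕ}
    (hs : s.countP (m ∣ ·) ≤ d) :
    (∏ j ∈ Icc 1 (d * m), (1 - X ^ j : RatFunc K)) *
        (s.map fun i => (1 - X ^ i : RatFunc K)⁻¹).prod =
      algebraMap K[X] (RatFunc K) ((1 - Polynomial.X ^ m) ^ (d - s.countP (m ∣ ·)) *
          ∏ j ∈ Icc 1 (d * m), cofactorOneSubXPow K m j) /
        algebraMap K[X] (RatFunc K) (s.map (cofactorOneSubXPow K m)).prod := by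
  have hXm : algebraMap K[X] (RatFunc K) (1 - Polynomial.X ^ m) ≠ 0 := by
    refine (map_ne_zero_iff _ (algebraMap_injective K)).2 fun h => ?_
    simpa [zero_pow hm.ne'] using congrArg (Polynomial.eval 0) h
  rw [Multiset.prod_map_inv, ← div_eq_mul_inv, prod_eq_multiset_prod,
    multiset_prod_one_sub_X_pow_eq_algebraMap, multiset_prod_one_sub_X_pow_eq_algebraMap,
    Polynomial.multiset_prod_one_sub_X_pow hm, Polynomial.multiset_prod_one_sub_X_pow hm,
    Finset.countP_dvd_Icc_one_mul hm, prod_eq_multiset_prod,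
    ← pow_sub_mul_pow (1 - Polynomial.X ^ m : K[X]) hs]
  simp only [map_mul, map_pow]
  field_simp

end RatFunc

theorem zPartition_of_parts_eq_replicate {n d m : ℕ} (hd : 0 < d) {ν : n.Partition}
    (h : ν.parts = Multiset.replicate d m) : zPartition ν = d ! * m ^ d := by
  simp [zPartition, h, Multiset.toFinset_replicate, hd.ne']

/-- Let `n = d·m` and let `χ` be any complex-valued function on the
partitions of `n`.  If, in `ℂ(q)`,
`(∏_{j=1}^n (1 − q^j)) · Σ_{ν ⊢ n} (χ(ν)/z_ν) · ∏_i (1 − q^{ν_i})⁻¹`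
equals a polynomial `f` with integer coefficients, then `f(ξ^d) = χ((m^d))` for
`ξ = exp(2πi/n)`. -/
theorem character_value_from_principal_specialization
    (n d m : ℕ) (hd : 0 < d) (hm : 0 < m) (hn : n = d * m)
    (χ : Nat.Partition n → ℂ) (f : Polynomial ℤ)
    (hf : (∏ j ∈ Finset.Icc 1 n, (1 - RatFunc.X ^ j : RatFunc ℂ)) *
        ∑ ν : Nat.Partition n,
          RatFunc.C (χ ν / zPartition ν) *
            ((ν.parts.map fun i => ((1 : RatFunc ℂ) - RatFunc.X ^ i)⁻¹).prod)
      = algebraMap (Polynomial ℂ) (RatFunc ℂ) (f.map (Int.castRingHom ℂ)))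
    (ξ : ℂ) (hξ : ξ = Complex.exp (2 * Real.pi * Complex.I / n)) :
    ∀ ν : Nat.Partition n, ν.parts = Multiset.replicate d m →
      Polynomial.eval (ξ ^ d) (f.map (Int.castRingHom ℂ)) = χ ν := by
  intro ν₀ hν₀
  subst hn
  have hζ : IsPrimitiveRoot (ξ ^ d) m :=
    (hξ ▸ Complex.isPrimitiveRoot_exp _ (by positivity)).pow (by positivity) rfl
  simp_rw [Finset.mul_sum, mul_left_comm _ (RatFunc.C _),
    RatFunc.prod_Icc_one_sub_X_pow_mul_prod_inv hm (Nat.Partition.countP_dvd_le hm rfl _),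
    ← RatFunc.algebraMap_C, ← mul_div_assoc, ← map_mul] at hf
  rw [Polynomial.eval_eq_sum_div_of_algebraMap_eq (fun ν _ =>
      eval_multiset_prod_cofactorOneSubXPow_ne_zero hζ fun _ => ν.parts_pos) hf,
    Finset.sum_eq_single ν₀ ?_ fun h => (h (mem_univ ν₀)).elim]
  · have hcount : ν₀.parts.countP (m ∣ ·) = d := by
      rw [hν₀, Multiset.countP_eq_card.2 fun x hx => by rw [Multiset.eq_of_mem_replicate hx],
        Multiset.card_replicate]
    rw [zPartition_of_parts_eq_replicate hd hν₀, hcount, Nat.sub_self, hν₀,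
      Multiset.map_replicate, cofactorOneSubXPow_self hm, Multiset.prod_replicate, one_pow]
    simp only [pow_zero, one_mul, eval_mul, eval_C, eval_prod,
      prod_Icc_eval_cofactorOneSubXPow hm hζ, eval_one, div_one]
    exact div_mul_cancel₀ _ (by norm_cast; positivity)
  · intro ν _ hν
    have hlt := Nat.Partition.countP_dvd_lt_of_parts_ne hm rfl fun h =>
      hν (Nat.Partition.ext (h.trans hν₀.symm))
    simp [hζ.pow_eq_one, zero_pow (Nat.sub_ne_zero_of_lt hlt)]
end

section
/- For any positive integer d and any positive integers m_1,…,m_k with sum m, the following inequality of real numbers holds: multinomial(d·m; d·m_1,…,d·m_k) / multinomial(m; m_1,…,m_k) ≥ d^{−(k−1)/2} · ( m^m / ∏_{j=1}^{k} m_j^{m_j} )^{d−1}, where multinomial(N; N_1,…,N_k) = N! / (N_1!·…·N_k!) for N = N_1 + … + N_k, and d^{−(k−1)/2} denotes the real power of d with exponent −(k−1)/2. -/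
/-!
Take logarithms and expand every factorial by Stirling's formula
`log n! = r n + (½ log (2n) + n log n - n)`, where `r n = log (stirlingSeq n)` satisfies Robbins'
bounds `log √π + 1/(12n+1) ≤ r n ≤ log √π + 1/(12n)`.
The explicit parts of the four factorial terms combine exactly to the logarithm of the right-hand
side, so it remains to show that the remainders `r(dM) - r(M) + ∑ (r(mᵢ) - r(d mᵢ))` are
nonnegative. For `d = 1` or `k = 1` they cancel. Otherwise `r(dM) ≥ log √π`,
`r(M) ≤ log √π + 1/(12M)`, `r(mᵢ) - r(d mᵢ) ≥ 1/(30 mᵢ)`, and Cauchy–Schwarz gives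
`∑ 1/mᵢ ≥ k²/M ≥ 4/M`.
-/

open Real Filter Topology Finset
open scoped Nat

theorem le_add_of_tendsto_of_sub_succ_le {u a : ℕ → ℝ} {L : ℝ}
    (hu : Tendsto u atTop (𝓝 L)) (ha : Tendsto a atTop (𝓝 0))
    (h : ∀ n, u n - u (n + 1) ≤ a n - a (n + 1)) (n : ℕ) :
    u n ≤ L + a n := by
  have hmono : Monotone fun n => u n - a n := monotone_nat_of_le_succ fun n => by linarith [h n]
  have := hmono.ge_of_tendsto (by simpa using hu.sub ha) n
  linarith

theorem add_le_of_tendsto_of_le_sub_succ {u a : ℕ → ℝ} {L : ℝ}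
    (hu : Tendsto u atTop (𝓝 L)) (ha : Tendsto a atTop (𝓝 0))
    (h : ∀ n, a n - a (n + 1) ≤ u n - u (n + 1)) (n : ℕ) :
    L + a n ≤ u n := by
  have hanti : Antitone fun n => u n - a n := antitone_nat_of_succ_le fun n => by linarith [h n]
  have := hanti.le_of_tendsto (by simpa using hu.sub ha) n
  linarith

theorem tendsto_one_div_twelve_mul_add (c : ℝ) :
    Tendsto (fun n : ℕ => 1 / (12 * ((n : ℝ) + 1) + c)) atTop (𝓝 0) :=
  tendsto_const_nhds.div_atTop <| tendsto_atTop_add_const_right _ _ <|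
    (tendsto_natCast_atTop_atTop.atTop_add tendsto_const_nhds).const_mul_atTop (by norm_num)

namespace Stirling

theorem tendsto_log_stirlingSeq : Tendsto (fun n => log (stirlingSeq n)) atTop (𝓝 (log √π)) :=
  ((continuousAt_log (sqrt_pos.mpr pi_pos).ne').tendsto).comp tendsto_stirlingSeq_sqrt_pi

theorem log_stirlingSeq_le {n : ℕ} (hn : n ≠ 0) :
    log (stirlingSeq n) ≤ log √π + 1 / (12 * n) := by
  obtain ⟨j, rfl⟩ := Nat.exists_eq_succ_of_ne_zero hn
  have := le_add_of_tendsto_of_sub_succ_le (tendsto_log_stirlingSeq.comp (tendsto_add_atTop_nat 1))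
    (by simpa using tendsto_one_div_twelve_mul_add 0)
    (fun j => (log_stirlingSeq_sdiff_le (j + 1)).trans_eq (by push_cast; field_simp; ring)) j
  simpa using this

theorem le_log_stirlingSeq_sdiff {n : ℕ} (hn : n ≠ 0) :
    1 / (12 * n + 1) - 1 / (12 * (n + 1) + 1) ≤
      log (stirlingSeq n) - log (stirlingSeq (n + 1)) := by
  obtain ⟨j, rfl⟩ := Nat.exists_eq_succ_of_ne_zero hn
  have hfirst := le_hasSum (log_stirlingSeq_sdiff_hasSum j) 0 (fun i _ => by positivity)
  refine le_trans ?_ hfirst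
  push_cast
  rw [div_sub_div _ _ (by positivity) (by positivity), div_le_iff₀ (by positivity)]
  field_simp
  nlinarith

theorem log_sqrt_pi_add_le_log_stirlingSeq {n : ℕ} (hn : n ≠ 0) :
    log √π + 1 / (12 * n + 1) ≤ log (stirlingSeq n) := by
  obtain ⟨j, rfl⟩ := Nat.exists_eq_succ_of_ne_zero hn
  have := add_le_of_tendsto_of_le_sub_succ
    (tendsto_log_stirlingSeq.comp (tendsto_add_atTop_nat 1)) (tendsto_one_div_twelve_mul_add 1)
    (fun j => (le_log_stirlingSeq_sdiff j.succ_ne_zero).trans_eq' (by push_cast; ring_nf)) j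
  simpa using this

end Stirling

noncomputable def stirlingMain (x : ℝ) : ℝ := 1 / 2 * log (2 * x) + x * log x - x

theorem log_factorial_eq_log_stirlingSeq_add (n : ℕ) :
    log n ! = log (Stirling.stirlingSeq n) + stirlingMain n := by
  rw [Stirling.log_stirlingSeq_formula, stirlingMain]
  rcases n.eq_zero_or_pos with rfl | hn
  · simp
  rw [log_div (by positivity) (exp_pos 1).ne', log_exp]
  ring

theorem stirlingMain_mul {d x : ℝ} (hd : d ≠ 0) (hx : x ≠ 0) :
    stirlingMain (d * x) = stirlingMain x + 1 / 2 * log d + (d - 1) * (x * log x)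
      + d * log d * x - (d - 1) * x := by
  simp only [stirlingMain, mul_left_comm (2 : ℝ), log_mul hd hx,
    log_mul hd (mul_ne_zero two_ne_zero hx)]
  ring

theorem log_multinomial {α : Type*} (s : Finset α) (f : α → ℕ) :
    log (Nat.multinomial s f) = log (∑ i ∈ s, f i)! - ∑ i ∈ s, log (f i)! := by
  have hfac : ∀ n : ℕ, (n ! : ℝ) ≠ 0 := fun n => mod_cast n.factorial_ne_zero
  rw [← Nat.multinomial_spec s f, Nat.cast_mul, Nat.cast_prod,
    log_mul (prod_ne_zero_iff.mpr fun i _ => hfac _) (mod_cast (Nat.multinomial_pos s f).ne'),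
    log_prod fun i _ => hfac _]
  ring

theorem log_multinomial_eq_stirlingMain_add {α : Type*} (s : Finset α) (f : α → ℕ) :
    log (Nat.multinomial s f) =
      stirlingMain (∑ i ∈ s, (f i : ℝ)) - ∑ i ∈ s, stirlingMain (f i)
        + (log (Stirling.stirlingSeq (∑ i ∈ s, f i))
          - ∑ i ∈ s, log (Stirling.stirlingSeq (f i))) := by
  simp only [log_multinomial, log_factorial_eq_log_stirlingSeq_add, sum_add_distrib, Nat.cast_sum]
  ring

theorem stirlingMain_stretch {ι : Type*} [Fintype ι] {d : ℝ} {x : ι → ℝ} (hd : d ≠ 0)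
    (hx : ∀ i, x i ≠ 0) (hX : ∑ i, x i ≠ 0) :
    (stirlingMain (d * ∑ i, x i) - ∑ i, stirlingMain (d * x i))
        - (stirlingMain (∑ i, x i) - ∑ i, stirlingMain (x i))
      = -((Fintype.card ι - 1) / 2) * log d
        + (d - 1) * ((∑ i, x i) * log (∑ i, x i) - ∑ i, x i * log (x i)) := by
  simp only [stirlingMain_mul hd hX, stirlingMain_mul hd (hx _), sum_add_distrib, sum_sub_distrib,
    sum_const, nsmul_eq_mul, ← mul_sum]
  rw [card_univ]
  ring

theorem Finset.card_sq_le_sum_mul_sum_inv {ι : Type*} (s : Finset ι) {x : ι → ℝ}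
    (hx : ∀ i ∈ s, 0 < x i) :
    (#s : ℝ) ^ 2 ≤ (∑ i ∈ s, x i) * ∑ i ∈ s, (x i)⁻¹ := by
  simpa using sum_sq_le_sum_mul_sum_of_sq_le_mul s (r := 1) (fun i hi => (hx i hi).le)
    (fun i hi => (inv_pos.mpr (hx i hi)).le) (fun i hi => by simp [(hx i hi).ne'])

theorem one_div_thirty_mul_le {d x : ℝ} (hd : 2 ≤ d) (hx : 1 ≤ x) :
    1 / (30 * x) ≤ 1 / (12 * x + 1) - 1 / (12 * (d * x)) := by
  have : 1 / (12 * (d * x)) ≤ 1 / (24 * x) :=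
    one_div_le_one_div_of_le (by positivity) (by nlinarith)
  have : 1 / (30 * x) ≤ 1 / (12 * x + 1) - 1 / (24 * x) := by
    rw [div_sub_div _ _ (by positivity) (by positivity),
      div_le_div_iff₀ (by positivity) (by positivity)]
    nlinarith
  linarith

open Stirling in
theorem log_stirlingSeq_stretch_nonneg {ι : Type*} [Fintype ι] [Nonempty ι] {d : ℕ}
    (hd : d ≠ 0) {m : ι → ℕ} (hm : ∀ i, m i ≠ 0) :
    0 ≤ (log (stirlingSeq (d * ∑ i, m i)) - ∑ i, log (stirlingSeq (d * m i)))
        - (log (stirlingSeq (∑ i, m i)) - ∑ i, log (stirlingSeq (m i))) := by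
  rcases eq_or_ne d 1 with rfl | hd1
  · simp
  rcases subsingleton_or_nontrivial ι with hι | hι
  · have : Unique ι := uniqueOfSubsingleton (Classical.arbitrary ι)
    simp
  have hd2 : (2 : ℝ) ≤ d := by norm_cast; omega
  have hM : ∑ i, m i ≠ 0 := (sum_pos (fun i _ => Nat.pos_of_ne_zero (hm i)) univ_nonempty).ne'
  have hM0 : (0 : ℝ) < ∑ i, (m i : ℝ) := mod_cast Nat.pos_of_ne_zero hM
  have hdM : log √π ≤ log (stirlingSeq (d * ∑ i, m i)) := by
    have := log_sqrt_pi_add_le_log_stirlingSeq (mul_ne_zero hd hM)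
    have : (0 : ℝ) < 1 / (12 * ((d * ∑ i, m i : ℕ) : ℝ) + 1) := by positivity
    linarith
  have hsum : log (stirlingSeq (∑ i, m i)) ≤ log √π + 1 / (12 * ∑ i, (m i : ℝ)) := by
    simpa using log_stirlingSeq_le hM
  have hterm (i : ι) :
      1 / (30 * (m i : ℝ)) ≤ log (stirlingSeq (m i)) - log (stirlingSeq (d * m i)) := by
    have hlow := log_sqrt_pi_add_le_log_stirlingSeq (hm i)
    have hup := log_stirlingSeq_le (mul_ne_zero hd (hm i))
    have helem := one_div_thirty_mul_le hd2 (x := m i) (mod_cast Nat.one_le_iff_ne_zero.mpr (hm i))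
    push_cast at hup
    linarith
  have hinv : 1 / (12 * ∑ i, (m i : ℝ)) ≤ ∑ i, 1 / (30 * (m i : ℝ)) := by
    have hcs := card_sq_le_sum_mul_sum_inv univ (x := fun i => (m i : ℝ))
      (fun i _ => mod_cast Nat.pos_of_ne_zero (hm i))
    have hcard : (2 : ℝ) ≤ #(univ : Finset ι) := by
      rw [card_univ]; exact_mod_cast Fintype.one_lt_card
    have hS : ∑ i, 1 / (30 * (m i : ℝ)) = (∑ i, ((m i : ℝ))⁻¹) / 30 := by
      simp only [one_div, mul_inv, ← mul_sum]; ring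
    rw [hS, div_le_div_iff₀ (by positivity) (by norm_num)]
    nlinarith
  have := sum_le_sum fun i (_ : i ∈ univ) => hterm i
  rw [sum_sub_distrib] at this
  linarith

/-- For any positive integer `d` and positive integers `m_1, …, m_k`
summing to `m`,
`multinomial(d·m; d·m_1,…,d·m_k) / multinomial(m; m_1,…,m_k)
  ≥ d^{−(k−1)/2} · (m^m / ∏_j m_j^{m_j})^{d−1}`. -/
theorem multinomial_stretch_quotient_bound
    (d k : ℕ) (hd : 0 < d) (hk : 0 < k) (m : Fin k → ℕ) (hm : ∀ i, 0 < m i) :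
    ((Nat.multinomial Finset.univ fun i => d * m i : ℕ) : ℝ) /
        ((Nat.multinomial Finset.univ m : ℕ) : ℝ) ≥
      (d : ℝ) ^ (-(((k : ℝ) - 1) / 2)) *
        (((∑ i, m i : ℕ) : ℝ) ^ (∑ i, m i) / ∏ i, (m i : ℝ) ^ (m i)) ^ (d - 1) := by
  have : Nonempty (Fin k) := ⟨⟨0, hk⟩⟩
  have hmR : ∀ i, (0 : ℝ) < m i := fun i => mod_cast hm i
  have hdR : (0 : ℝ) < d := mod_cast hd
  have hMR : (0 : ℝ) < ∑ i, (m i : ℝ) := sum_pos (fun i _ => hmR i) univ_nonempty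
  have hpow : (0 : ℝ) < ((∑ i, m i : ℕ) : ℝ) ^ (∑ i, m i) :=
    pow_pos (by simpa using hMR) _
  have hprod : (0 : ℝ) < ∏ i, (m i : ℝ) ^ (m i) := prod_pos fun i _ => pow_pos (hmR i) _
  have hA : (0 : ℝ) < Nat.multinomial univ fun i => d * m i := mod_cast Nat.multinomial_pos _ _
  have hB : (0 : ℝ) < Nat.multinomial univ m := mod_cast Nat.multinomial_pos _ _
  have hmain := stirlingMain_stretch hdR.ne' (fun i => (hmR i).ne') hMR.ne'
  have hrem := log_stirlingSeq_stretch_nonneg hd.ne' (fun i => (hm i).ne')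
  rw [ge_iff_le, ← log_le_log_iff (by positivity) (div_pos hA hB), log_div hA.ne' hB.ne',
    log_mul (by positivity) (by positivity), log_rpow hdR, log_pow, log_div hpow.ne' hprod.ne',
    log_pow, log_prod fun i _ => (pow_pos (hmR i) _).ne', log_multinomial_eq_stirlingMain_add,
    log_multinomial_eq_stirlingMain_add]
  simp only [log_pow, Nat.cast_mul, Nat.cast_sum, Nat.cast_pred hd, Fintype.card_fin, ← mul_sum]
    at hmain hrem ⊢
  linarith
end

section
/- For any integer d > 1, any integer k > 1, and any positive integers m_1,…,m_k with sum m, the inequality multinomial(d·m; d·m_1,…,d·m_k) / multinomial(m; m_1,…,m_k) ≥ ∏_{j=1}^{k} (τ(d·m_j) − 1) holds, where τ(N) denotes the number of positive divisors of N. -/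
/-!
Since every proper divisor of `n` is at most `n / 2`, `τ(n) - 1 ≤ n / 2`, so it suffices to show
`∏ (d mᵢ) · M(m) ≤ 2ᵏ · M(d m)`. Peeling off one part at a time, `M` factors into binomial
coefficients, and Vandermonde gives `C(da + db, da) ≥ C(a + b, a) · C(ea + eb, ea)` with
`e = d - 1`; the last factor is at least `ea · eb ≥ da · db / 4`. Each peeled part contributes
`da · C(a + b, a) ≤ 2 · C(da + db, da)` (as `db ≥ 2`), and the final pair the factor `4`.
-/

open Finset

namespace Nat

theorem choose_mul_choose_le_add_choose (a b c d : ℕ) :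
    a.choose c * b.choose d ≤ (a + b).choose (c + d) := by
  rw [add_choose_eq]
  exact single_le_sum (f := fun ij => a.choose ij.1 * b.choose ij.2)
    (fun _ _ => Nat.zero_le _) (a := (c, d)) (mem_antidiagonal.mpr rfl)

theorem mul_le_add_choose (a b : ℕ) : a * b ≤ (a + b).choose a := by
  cases a with
  | zero => simp
  | succ a =>
    simpa [choose_succ_self_right, add_right_comm a 1 b] using
      choose_mul_choose_le_add_choose (a + 1) b a 1

theorem mul_mul_mul_choose_le_four_mul_choose {d : ℕ} (hd : 2 ≤ d) (a b : ℕ) :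
    d * a * (d * b) * (a + b).choose a ≤ 4 * (d * a + d * b).choose (d * a) := by
  obtain ⟨e, rfl⟩ : ∃ e, d = e + 1 := ⟨d - 1, by omega⟩
  have hvandermonde : (a + b).choose a * (e * a + e * b).choose (e * a)
      ≤ ((e + 1) * a + (e + 1) * b).choose ((e + 1) * a) := by
    convert choose_mul_choose_le_add_choose (a + b) (e * a + e * b) a (e * a) using 2 <;> ring
  have hsq : (e + 1) * a * ((e + 1) * b) ≤ 4 * (e * a * (e * b)) := by
    have : (e + 1) * (e + 1) ≤ 4 * (e * e) := by nlinarith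
    calc (e + 1) * a * ((e + 1) * b) = (e + 1) * (e + 1) * (a * b) := by ring
      _ ≤ 4 * (e * e) * (a * b) := Nat.mul_le_mul_right _ this
      _ = 4 * (e * a * (e * b)) := by ring
  calc (e + 1) * a * ((e + 1) * b) * (a + b).choose a
      ≤ 4 * (e * a * (e * b)) * (a + b).choose a := Nat.mul_le_mul_right _ hsq
    _ ≤ 4 * ((e * a + e * b).choose (e * a) * (a + b).choose a) := by
      rw [mul_assoc]
      exact Nat.mul_le_mul_left _ (Nat.mul_le_mul_right _ (mul_le_add_choose _ _))
    _ ≤ 4 * ((e + 1) * a + (e + 1) * b).choose ((e + 1) * a) := by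
      rw [mul_comm ((e * a + e * b).choose _)]
      exact Nat.mul_le_mul_left _ hvandermonde

theorem mul_mul_choose_le_two_mul_choose {d b : ℕ} (hd : 2 ≤ d) (hb : 0 < b) (a : ℕ) :
    d * a * (a + b).choose a ≤ 2 * (d * a + d * b).choose (d * a) := by
  have h := mul_mul_mul_choose_le_four_mul_choose hd a b
  have hdb : 2 ≤ d * b := by nlinarith
  nlinarith

theorem prod_mul_multinomial_le_two_pow_mul_multinomial {α : Type*} {d : ℕ} (hd : 2 ≤ d)
    (f : α → ℕ) (hf : ∀ i, 0 < f i) (s : Finset α) (hs : 2 ≤ #s) :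
    (∏ i ∈ s, d * f i) * multinomial s f ≤ 2 ^ #s * multinomial s (fun i => d * f i) := by
  induction s using Finset.cons_induction with
  | empty => simp at hs
  | cons a s ha ih =>
    rw [multinomial_cons, multinomial_cons, prod_cons, card_cons, ← mul_sum]
    rcases (by rw [card_cons] at hs; omega : #s = 1 ∨ 2 ≤ #s) with hs1 | hs2
    · obtain ⟨b, rfl⟩ := card_eq_one.mp hs1
      simpa [mul_comm, mul_left_comm, mul_assoc] using
        mul_mul_mul_choose_le_four_mul_choose hd (f a) (f b)
    · have hS : 0 < ∑ i ∈ s, f i :=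
        sum_pos (fun i _ => hf i) (Finset.card_pos.mp (by omega : 0 < #s))
      calc d * f a * (∏ i ∈ s, d * f i) * ((f a + ∑ i ∈ s, f i).choose (f a) * multinomial s f)
          = (d * f a * (f a + ∑ i ∈ s, f i).choose (f a))
            * ((∏ i ∈ s, d * f i) * multinomial s f) := by ring
        _ ≤ (2 * (d * f a + d * ∑ i ∈ s, f i).choose (d * f a))
            * (2 ^ #s * multinomial s (fun i => d * f i)) :=
          Nat.mul_le_mul (mul_mul_choose_le_two_mul_choose hd hS _) (ih hs2)
        _ = 2 ^ (#s + 1) * ((d * f a + d * ∑ i ∈ s, f i).choose (d * f a)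
            * multinomial s (fun i => d * f i)) := by ring

theorem card_properDivisors_le_half (n : ℕ) : #n.properDivisors ≤ n / 2 := by
  calc #n.properDivisors ≤ #(Icc 1 (n / 2)) := card_le_card fun m hm => by
        have hquot := one_lt_div_of_mem_properDivisors hm
        have hle : m * (n / m) ≤ n := Nat.mul_div_le n m
        exact mem_Icc.mpr ⟨pos_of_mem_properDivisors hm, (Nat.le_div_iff_mul_le two_pos).mpr
          (by nlinarith)⟩
    _ = n / 2 := by simp

theorem card_divisors_sub_one_le_half (n : ℕ) : (#n.divisors : ℝ) - 1 ≤ n / 2 := by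
  rcases eq_or_ne n 0 with rfl | hn
  · simp
  have hcard : #n.divisors = #n.properDivisors + 1 := by
    rw [← cons_self_properDivisors hn, card_cons]
  have hproper : (#n.properDivisors : ℝ) ≤ (n / 2 : ℕ) := by
    exact_mod_cast card_properDivisors_le_half n
  have hfloor : ((n / 2 : ℕ) : ℝ) ≤ n / 2 := Nat.cast_div_le
  rw [hcard, Nat.cast_add, Nat.cast_one]
  linarith

end Nat

/-- For integers `d > 1`, `k > 1` and positive integers `m_1, …, m_k`,
`multinomial(d·m; d·m_1,…,d·m_k) / multinomial(m; m_1,…,m_k) ≥ ∏_j (τ(d·m_j) − 1)`,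
where `τ(N)` is the number of positive divisors of `N`. -/
theorem multinomial_stretch_quotient_divisor_bound
    (d k : ℕ) (hd : 1 < d) (hk : 1 < k) (m : Fin k → ℕ) (hm : ∀ i, 0 < m i) :
    ((Nat.multinomial Finset.univ fun i => d * m i : ℕ) : ℝ) /
        ((Nat.multinomial Finset.univ m : ℕ) : ℝ) ≥
      ∏ i, (((d * m i).divisors.card : ℝ) - 1) := by
  have key := Nat.prod_mul_multinomial_le_two_pow_mul_multinomial hd m hm univ
    (by rw [Finset.card_fin]; exact hk)
  rw [Finset.card_fin] at key
  have hM : (0 : ℝ) < Nat.multinomial univ m := by exact_mod_cast Nat.multinomial_pos _ _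
  calc ∏ i, (((d * m i).divisors.card : ℝ) - 1)
      ≤ ∏ i, ((d * m i : ℕ) : ℝ) / 2 := by
        refine prod_le_prod (fun i _ => ?_) (fun i _ => Nat.card_divisors_sub_one_le_half _)
        have hτ : 1 ≤ #(d * m i).divisors :=
          card_pos.mpr (Nat.nonempty_divisors.mpr (Nat.mul_pos (by omega) (hm i)).ne')
        exact sub_nonneg.mpr (by exact_mod_cast hτ)
    _ = ((∏ i, d * m i : ℕ) : ℝ) / 2 ^ k := by
        rw [prod_div_distrib, prod_const, Finset.card_fin, Nat.cast_prod]
    _ ≤ _ := by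
        rw [div_le_div_iff₀ (by positivity) hM]
        exact_mod_cast key.trans_eq (mul_comm _ _)
end

section
/- For every integer n ≥ 9, one has B_n(n²/3) ≤ 2, where B_n(x) = Σ_{d | n} Q(n,d) · x^{1/d − 1} (sum over all positive divisors d of n), and Q(n,d) = ( d^n · ((n/d)!)^d / n! )^{1/d}. -/
/-!
Stirling's bounds `√(2πn) (n/e)^n ≤ n!` and `m! ≤ e √m (m/e)^m` give
`Q(n,d)^d ≤ (e √(n/d))^d / √(2πn)`, so every summand of `B_n(n²/3)` with `d ≥ 2` is bounded by
an explicit negative power of `n`. For `n ≥ 12` the summands at `d = 2, 3, 4` are below `0.327`,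
`0.201`, `0.151`, and each of the at most `n/5` divisors `d ≥ 5` contributes less than `1.49/n`;
with the summand `1` at `d = 1` the total stays below `2`. For `n = 9, 10, 11` the summands are
bounded by exact rational computation.
-/

open Real Finset

lemma mul_rpow_one_div_sub_one_le {a x q : ℝ} {d : ℕ} (hx : 0 < x) (hq : 0 ≤ q)
    (hd : d ≠ 0) (h : a ^ d * x ≤ (q * x) ^ d) : a * x ^ ((1 : ℝ) / d - 1) ≤ q := by
  rw [rpow_sub hx, rpow_one, ← mul_div_assoc, div_le_iff₀ hx]
  refine le_of_pow_le_pow_left₀ hd (by positivity) ?_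
  rwa [mul_pow, one_div, rpow_inv_natCast_pow hx.le hd]

lemma pow_mul_le_pow_mul_of_le {a b X Y : ℝ} {k d : ℕ} (ha : 0 ≤ a) (hab : a ≤ b) (hX : 0 ≤ X)
    (hkd : k ≤ d) (h : a ^ k * X ≤ b ^ k * Y) : a ^ d * X ≤ b ^ d * Y :=
  calc a ^ d * X = a ^ (d - k) * (a ^ k * X) := by
        rw [← mul_assoc, ← pow_add, Nat.sub_add_cancel hkd]
    _ ≤ b ^ (d - k) * (b ^ k * Y) := by
        gcongr
        exact pow_nonneg (ha.trans hab) _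
    _ = b ^ d * Y := by rw [← mul_assoc, ← pow_add, Nat.sub_add_cancel hkd]

lemma factorial_le_stirling {m : ℕ} (hm : m ≠ 0) :
    (m.factorial : ℝ) ≤ exp 1 * √m * (m / exp 1) ^ m := by
  have h := Stirling.stirlingSeq'_antitone (Nat.zero_le (m - 1))
  simp only [Function.comp_apply, Nat.succ_eq_add_one, Nat.sub_add_cancel
    (Nat.one_le_iff_ne_zero.2 hm), zero_add, Stirling.stirlingSeq_one] at h
  rw [Stirling.stirlingSeq, div_le_iff₀ (by positivity)] at h
  calc (m.factorial : ℝ) ≤ exp 1 / √2 * (√(2 * m) * (m / exp 1) ^ m) := h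
    _ = exp 1 * √m * (m / exp 1) ^ m := by
      rw [sqrt_mul zero_le_two]
      field_simp

lemma Nat.card_divisors_filter_le_le_div (n : ℕ) {k : ℕ} (hk : 0 < k) :
    #{d ∈ n.divisors | k ≤ d} ≤ n / k := by
  calc #{d ∈ n.divisors | k ≤ d} ≤ #((Icc 1 (n / k)).image (n / ·)) := by
        refine card_le_card fun d hd => ?_
        obtain ⟨⟨hdn, hn⟩, hkd⟩ := by simpa only [mem_filter, Nat.mem_divisors] using hd
        refine mem_image.2 ⟨n / d, mem_Icc.2 ⟨?_, Nat.div_le_div_left hkd hk⟩,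
          Nat.div_div_self hdn hn⟩
        exact Nat.div_pos (Nat.le_of_dvd (Nat.pos_of_ne_zero hn) hdn) (by omega)
    _ ≤ #(Icc 1 (n / k)) := Finset.card_image_le
    _ = n / k := by simp

namespace DivisorBound

noncomputable def Q (n d : ℕ) : ℝ :=
  ((d : ℝ) ^ n * ((n / d).factorial : ℝ) ^ d / (n.factorial : ℝ)) ^ ((1 : ℝ) / d)

noncomputable def summand (n d : ℕ) (x : ℝ) : ℝ :=
  Q n d * x ^ ((1 : ℝ) / d - 1)

noncomputable def B (n : ℕ) (x : ℝ) : ℝ :=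
  ∑ d ∈ n.divisors, summand n d x

lemma Q_one (n : ℕ) : Q n 1 = 1 := by
  simp [Q, n.factorial_ne_zero]

lemma Q_pow {d : ℕ} (n : ℕ) (hd : d ≠ 0) :
    Q n d ^ d = (d : ℝ) ^ n * ((n / d).factorial : ℝ) ^ d / n.factorial := by
  rw [Q, one_div]
  exact rpow_inv_natCast_pow (by positivity) hd

lemma summand_one (n : ℕ) (x : ℝ) : summand n 1 x = 1 := by
  simp [summand, Q_one]

lemma summand_le_of_pow_mul_le {n d : ℕ} {x q : ℝ} (hd : d ≠ 0) (hx : 0 < x) (hq : 0 ≤ q)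
    (h : (d : ℝ) ^ n * ((n / d).factorial : ℝ) ^ d / n.factorial * x ≤ (q * x) ^ d) :
    summand n d x ≤ q :=
  mul_rpow_one_div_sub_one_le hx hq hd (by rwa [Q_pow n hd])

lemma Q_pow_le {d m : ℕ} (hd : d ≠ 0) (hm : m ≠ 0) :
    Q (d * m) d ^ d ≤ (exp 1 * √m) ^ d / √(2 * π * (d * m : ℕ)) := by
  rw [Q_pow _ hd, Nat.mul_div_cancel_left _ (Nat.pos_of_ne_zero hd)]
  calc (d : ℝ) ^ (d * m) * (m.factorial : ℝ) ^ d / (d * m).factorial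
      ≤ (d : ℝ) ^ (d * m) * (exp 1 * √m * (m / exp 1) ^ m) ^ d /
          (√(2 * π * (d * m : ℕ)) * ((d * m : ℕ) / exp 1) ^ (d * m)) := by
        gcongr
        · exact factorial_le_stirling hm
        · exact Stirling.le_factorial_stirling _
    _ = (exp 1 * √m) ^ d / √(2 * π * (d * m : ℕ)) := by
      have : (0 : ℝ) < d := by positivity
      have : (0 : ℝ) < m := by positivity
      field_simp
      push_cast
      ring

lemma summand_le_of_stirling {n d : ℕ} {x q : ℝ} (hn : n ≠ 0) (hdn : d ∣ n) (hx : 0 < x)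
    (hq : 0 ≤ q) (h : (exp 1 ^ 2 * (n / d)) ^ d * x ^ 2 ≤ ((q * x) ^ 2) ^ d * (2 * π * n)) :
    summand n d x ≤ q := by
  obtain ⟨m, rfl⟩ := hdn
  have hd : d ≠ 0 := left_ne_zero_of_mul hn
  have hm : m ≠ 0 := right_ne_zero_of_mul hn
  refine mul_rpow_one_div_sub_one_le hx hq hd ?_
  have hS : 0 < √(2 * π * (d * m : ℕ)) := by positivity
  calc Q (d * m) d ^ d * x ≤ (exp 1 * √m) ^ d / √(2 * π * (d * m : ℕ)) * x := by
        gcongr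
        exact Q_pow_le hd hm
    _ ≤ (q * x) ^ d := by
      rw [div_mul_eq_mul_div, div_le_iff₀ hS]
      refine le_of_pow_le_pow_left₀ two_ne_zero (by positivity) ?_
      have hm' : ((d * m : ℕ) : ℝ) / d = m := by
        push_cast
        field_simp
      calc ((exp 1 * √m) ^ d * x) ^ 2 = (exp 1 ^ 2 * √m ^ 2) ^ d * x ^ 2 := by ring
        _ ≤ ((q * x) ^ 2) ^ d * (2 * π * (d * m : ℕ)) := by
          rwa [sq_sqrt (Nat.cast_nonneg m), ← hm']
        _ = ((q * x) ^ d * √(2 * π * (d * m : ℕ))) ^ 2 := by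
          rw [mul_pow _ √_, sq_sqrt (by positivity)]
          ring

lemma summand_two_le {n : ℕ} (hn : 12 ≤ n) (h2 : 2 ∣ n) :
    summand n 2 ((n : ℝ) ^ 2 / 3) ≤ 327 / 1000 := by
  refine summand_le_of_stirling (by omega) h2 (by positivity) (by norm_num) ?_
  have key : 81 * exp 1 ^ 4 ≤ 72 * π * (327 / 1000) ^ 4 * n ^ 3 :=
    calc 81 * exp 1 ^ 4 ≤ 81 * 2.7182818286 ^ 4 := by gcongr; exact exp_one_lt_d9.le
      _ ≤ 72 * 3.141592 * (327 / 1000) ^ 4 * 12 ^ 3 := by norm_num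
      _ ≤ 72 * π * (327 / 1000) ^ 4 * n ^ 3 := by
        gcongr
        · exact pi_gt_d6.le
        · exact_mod_cast hn
  calc (exp 1 ^ 2 * (n / (2 : ℕ))) ^ 2 * ((n : ℝ) ^ 2 / 3) ^ 2
      = n ^ 6 / 2916 * (81 * exp 1 ^ 4) := by push_cast; ring
    _ ≤ n ^ 6 / 2916 * (72 * π * (327 / 1000) ^ 4 * n ^ 3) := by gcongr
    _ = ((327 / 1000 * ((n : ℝ) ^ 2 / 3)) ^ 2) ^ 2 * (2 * π * n) := by ring

lemma summand_three_le {n : ℕ} (hn : 12 ≤ n) (h3 : 3 ∣ n) :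
    summand n 3 ((n : ℝ) ^ 2 / 3) ≤ 201 / 1000 := by
  refine summand_le_of_stirling (by omega) h3 (by positivity) (by norm_num) ?_
  have key : 3 * exp 1 ^ 6 ≤ 2 * π * (201 / 1000) ^ 6 * n ^ 6 :=
    calc 3 * exp 1 ^ 6 ≤ 3 * 2.7182818286 ^ 6 := by gcongr; exact exp_one_lt_d9.le
      _ ≤ 2 * 3.141592 * (201 / 1000) ^ 6 * 12 ^ 6 := by norm_num
      _ ≤ 2 * π * (201 / 1000) ^ 6 * n ^ 6 := by
        gcongr
        · exact pi_gt_d6.le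
        · exact_mod_cast hn
  calc (exp 1 ^ 2 * (n / (3 : ℕ))) ^ 3 * ((n : ℝ) ^ 2 / 3) ^ 2
      = n ^ 7 / 729 * (3 * exp 1 ^ 6) := by push_cast; ring
    _ ≤ n ^ 7 / 729 * (2 * π * (201 / 1000) ^ 6 * n ^ 6) := by gcongr
    _ = ((201 / 1000 * ((n : ℝ) ^ 2 / 3)) ^ 2) ^ 3 * (2 * π * n) := by ring

lemma summand_four_le {n : ℕ} (hn : 12 ≤ n) (h4 : 4 ∣ n) :
    summand n 4 ((n : ℝ) ^ 2 / 3) ≤ 151 / 1000 := by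
  refine summand_le_of_stirling (by omega) h4 (by positivity) (by norm_num) ?_
  have key : 6561 * exp 1 ^ 8 ≤ 4608 * π * (151 / 1000) ^ 8 * n ^ 9 :=
    calc 6561 * exp 1 ^ 8 ≤ 6561 * 2.7182818286 ^ 8 := by gcongr; exact exp_one_lt_d9.le
      _ ≤ 4608 * 3.141592 * (151 / 1000) ^ 8 * 12 ^ 9 := by norm_num
      _ ≤ 4608 * π * (151 / 1000) ^ 8 * n ^ 9 := by
        gcongr
        · exact pi_gt_d6.le
        · exact_mod_cast hn
  calc (exp 1 ^ 2 * (n / (4 : ℕ))) ^ 4 * ((n : ℝ) ^ 2 / 3) ^ 2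
      = n ^ 8 / 15116544 * (6561 * exp 1 ^ 8) := by push_cast; ring
    _ ≤ n ^ 8 / 15116544 * (4608 * π * (151 / 1000) ^ 8 * n ^ 9) := by gcongr
    _ = ((151 / 1000 * ((n : ℝ) ^ 2 / 3)) ^ 2) ^ 4 * (2 * π * n) := by ring

lemma summand_le_of_five_le {n d : ℕ} (hn : 12 ≤ n) (hd : 5 ≤ d) (hdn : d ∣ n) :
    summand n d ((n : ℝ) ^ 2 / 3) ≤ 149 / (100 * n) := by
  have hn0 : (0 : ℝ) < n := by positivity
  refine summand_le_of_stirling (by omega) hdn (by positivity) (by positivity) ?_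
  have hqx : 149 / (100 * n) * ((n : ℝ) ^ 2 / 3) = 149 / 300 * n := by
    field_simp
    ring
  rw [hqx]
  set a : ℝ := exp 1 ^ 2 * (n / 5) with ha
  set b : ℝ := (149 / 300 * n) ^ 2 with hb
  have hda : exp 1 ^ 2 * (n / d) ≤ a := by
    rw [ha]
    gcongr
    exact_mod_cast hd
  have hab : a ≤ b := by
    have : exp 1 ^ 2 ≤ 5 * (149 / 300) ^ 2 * n :=
      calc exp 1 ^ 2 ≤ 2.7182818286 ^ 2 := by gcongr; exact exp_one_lt_d9.le
        _ ≤ 5 * (149 / 300) ^ 2 * 12 := by norm_num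
        _ ≤ 5 * (149 / 300) ^ 2 * n := by gcongr; exact_mod_cast hn
    calc a = n / 5 * exp 1 ^ 2 := by rw [ha]; ring
      _ ≤ n / 5 * (5 * (149 / 300) ^ 2 * n) := by gcongr
      _ = b := by rw [hb]; ring
  have key : exp 1 ^ 10 ≤ 56250 * π * (149 / 300) ^ 10 * n ^ 2 :=
    calc exp 1 ^ 10 ≤ 2.7182818286 ^ 10 := by gcongr; exact exp_one_lt_d9.le
      _ ≤ 56250 * 3.141592 * (149 / 300) ^ 10 * 12 ^ 2 := by norm_num
      _ ≤ 56250 * π * (149 / 300) ^ 10 * n ^ 2 := by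
        gcongr
        · exact pi_gt_d6.le
        · exact_mod_cast hn
  have hfive : a ^ 5 * ((n : ℝ) ^ 2 / 3) ^ 2 ≤ b ^ 5 * (2 * π * n) :=
    calc a ^ 5 * ((n : ℝ) ^ 2 / 3) ^ 2 = n ^ 9 / 28125 * exp 1 ^ 10 := by rw [ha]; ring
      _ ≤ n ^ 9 / 28125 * (56250 * π * (149 / 300) ^ 10 * n ^ 2) := by gcongr
      _ = b ^ 5 * (2 * π * n) := by rw [hb]; ring
  calc (exp 1 ^ 2 * (n / d)) ^ d * ((n : ℝ) ^ 2 / 3) ^ 2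
      ≤ a ^ d * ((n : ℝ) ^ 2 / 3) ^ 2 := by gcongr
    _ ≤ b ^ d * (2 * π * n) :=
      pow_mul_le_pow_mul_of_le (by positivity) hab (by positivity) hd hfive

lemma sum_summand_lt_five_le {n : ℕ} (hn : 12 ≤ n) :
    ∑ d ∈ n.divisors with ¬ 5 ≤ d, summand n d ((n : ℝ) ^ 2 / 3)
      ≤ 1 + (327 / 1000 + (201 / 1000 + 151 / 1000)) := by
  have hfilter : {d ∈ n.divisors | ¬ 5 ≤ d} = {d ∈ ({1, 2, 3, 4} : Finset ℕ) | d ∣ n} := by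
    ext d
    simp only [mem_filter, Nat.mem_divisors, mem_insert, mem_singleton]
    constructor
    · rintro ⟨⟨hdn, -⟩, hd5⟩
      have hd0 := Nat.pos_of_dvd_of_pos hdn (by omega)
      exact ⟨by omega, hdn⟩
    · rintro ⟨hd, hdn⟩
      exact ⟨⟨hdn, by omega⟩, by omega⟩
  rw [hfilter, sum_filter, sum_insert (by decide), sum_insert (by decide), sum_insert (by decide),
    sum_singleton, if_pos (one_dvd n), summand_one]
  gcongr
  · split_ifs with h
    exacts [summand_two_le hn h, by norm_num]
  · split_ifs with h
    exacts [summand_three_le hn h, by norm_num]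
  · split_ifs with h
    exacts [summand_four_le hn h, by norm_num]

lemma sum_summand_five_le_le {n : ℕ} (hn : 12 ≤ n) :
    ∑ d ∈ n.divisors with 5 ≤ d, summand n d ((n : ℝ) ^ 2 / 3) ≤ 149 / 500 := by
  have hcard : (#{d ∈ n.divisors | 5 ≤ d} : ℝ) ≤ n / 5 :=
    (Nat.cast_le.2 (Nat.card_divisors_filter_le_le_div n (by norm_num))).trans Nat.cast_div_le
  calc _ ≤ #{d ∈ n.divisors | 5 ≤ d} • (149 / (100 * n) : ℝ) := by
        refine sum_le_card_nsmul _ _ _ fun d hd => ?_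
        obtain ⟨hdn, hd5⟩ := mem_filter.1 hd
        exact summand_le_of_five_le hn hd5 (Nat.dvd_of_mem_divisors hdn)
    _ ≤ n / 5 * (149 / (100 * n)) := by
        rw [nsmul_eq_mul]
        gcongr
    _ = 149 / 500 := by
        field_simp
        ring

lemma B_le_two_of_twelve_le {n : ℕ} (hn : 12 ≤ n) : B n ((n : ℝ) ^ 2 / 3) ≤ 2 := by
  rw [B, ← sum_filter_add_sum_filter_not _ (5 ≤ ·)]
  linarith [sum_summand_five_le_le hn, sum_summand_lt_five_le hn]

lemma B_le_two_of_le_eleven {n : ℕ} (hn : 9 ≤ n) (hn' : n ≤ 11) :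
    B n ((n : ℝ) ^ 2 / 3) ≤ 2 := by
  interval_cases n
  · rw [B, show (9 : ℕ).divisors = {1, 3, 9} by decide, sum_insert (by decide),
      sum_pair (by norm_num), summand_one]
    have h3 : summand 9 3 ((9 : ℕ) ^ 2 / 3) ≤ 1 / 2 := summand_le_of_pow_mul_le
      (by norm_num) (by norm_num) (by norm_num) (by norm_num [Nat.factorial])
    have h9 : summand 9 9 ((9 : ℕ) ^ 2 / 3) ≤ 1 / 2 := summand_le_of_pow_mul_le
      (by norm_num) (by norm_num) (by norm_num) (by norm_num [Nat.factorial])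
    linarith
  · rw [B, show (10 : ℕ).divisors = {1, 2, 5, 10} by decide, sum_insert (by decide),
      sum_insert (by decide), sum_pair (by norm_num), summand_one]
    have h2 : summand 10 2 ((10 : ℕ) ^ 2 / 3) ≤ 2 / 5 := summand_le_of_pow_mul_le
      (by norm_num) (by norm_num) (by norm_num) (by norm_num [Nat.factorial])
    have h5 : summand 10 5 ((10 : ℕ) ^ 2 / 3) ≤ 1 / 5 := summand_le_of_pow_mul_le
      (by norm_num) (by norm_num) (by norm_num) (by norm_num [Nat.factorial])
    have h10 : summand 10 10 ((10 : ℕ) ^ 2 / 3) ≤ 1 / 5 := summand_le_of_pow_mul_le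
      (by norm_num) (by norm_num) (by norm_num) (by norm_num [Nat.factorial])
    linarith
  · rw [B, show (11 : ℕ).divisors = {1, 11} by decide, sum_pair (by norm_num), summand_one]
    have h11 : summand 11 11 ((11 : ℕ) ^ 2 / 3) ≤ 1 := summand_le_of_pow_mul_le
      (by norm_num) (by norm_num) (by norm_num) (by norm_num [Nat.factorial])
    linarith

end DivisorBound

/-- For every integer `n ≥ 9`, `B_n(n²/3) ≤ 2`, where
`B_n(x) = Σ_{d ∣ n} Q(n,d) · x^{1/d − 1}` and `Q(n,d) = (d^n · ((n/d)!)^d / n!)^{1/d}`. -/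
theorem B_n_at_n_sq_div_three_le_two (n : ℕ) (hn : 9 ≤ n) :
    ∑ d ∈ n.divisors,
        ((d : ℝ) ^ n * ((n / d).factorial : ℝ) ^ d / (n.factorial : ℝ)) ^ ((1 : ℝ) / d) *
          ((n : ℝ) ^ 2 / 3) ^ ((1 : ℝ) / d - 1) ≤ 2 := by
  change DivisorBound.B n ((n : ℝ) ^ 2 / 3) ≤ 2
  rcases le_or_gt 12 n with hn' | hn'
  · exact DivisorBound.B_le_two_of_twelve_le hn'
  · exact DivisorBound.B_le_two_of_le_eleven hn (by omega)
end
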